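/- arXiv:2309.03810 — 2 statements merged into one kernel-verified Lean document; each statement's English description precedes it below -/
import Mathlib

section
/- Let G be a 3-regular finite simple graph on n vertices (so n is even, n ≥ 4), and let q = 3n + 4. If a bijection π : V(G[q]) → V(D_{n,q}) satisfies μ_edit(G[q]^π, D_{n,q}) = δ_edit(G[q], D_{n,q}), then π is (G, C_n)-conservative, i.e., π maps V(G) (the original vertices of G inside G[q]) into V(C_n) (the original cycle vertices inside D_{n,q}). -/
/-!
Sending each vertex of `G` to a cycle vertex and each clique to a clique (via any bijection
`V ≃ Fin n`) leaves a mismatch graph in which every cycle vertex has degree at most `3 + 2`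
and the only other mismatch edges are the `n / 2` matching edges between attachment vertices
`v^[1]`; hence `δ_edit ≤ 3n`. Conversely, if `π` sends an original vertex `v` into a clique,
then by counting some clique vertex of `G[q]` is sent to a cycle vertex. At the first image a
vertex of degree `≤ 4` meets one of degree `≥ q`, at the second a vertex of degree `≥ q` meets
one of degree `≤ 3`, so their mismatch degrees sum to at least `2q - 7 = 6n + 1`, and the
handshake lemma gives `μ_edit(π) > 3n`.
-/

open SimpleGraph

section MismatchDefs

variable {V W : Type*}

/-- The mismatch graph `G^π − H`: the symmetric difference of the image of `G` under the
bijection `π` with `H`, as a graph on `V(H)`. Its edges are the positive edges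
(edges of `G^π` not in `H`) together with the negative edges (edges of `H` not in `G^π`). -/
def mismatchGraph (G : SimpleGraph V) (H : SimpleGraph W) (π : V ≃ W) : SimpleGraph W :=
  symmDiff (G.map π.toEmbedding) H

/-- The degree of a vertex in the mismatch graph `G^π − H`. -/
noncomputable def mismatchDeg (G : SimpleGraph V) (H : SimpleGraph W) (π : V ≃ W) (x : W) : ℕ :=
  ((mismatchGraph G H π).neighborSet x).ncard

/-- The number of positive edges of `G^π − H` incident to `x`. -/
noncomputable def posDeg (G : SimpleGraph V) (H : SimpleGraph W) (π : V ≃ W) (x : W) : ℕ :=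
  ((G.map π.toEmbedding).neighborSet x \ H.neighborSet x).ncard

/-- The number of negative edges of `G^π − H` incident to `x`. -/
noncomputable def negDeg (G : SimpleGraph V) (H : SimpleGraph W) (π : V ≃ W) (x : W) : ℕ :=
  (H.neighborSet x \ (G.map π.toEmbedding).neighborSet x).ncard

/-- The maximum mismatch count `MMC(π)`: the maximum degree of the mismatch graph `G^π − H`. -/
noncomputable def MMC [Fintype W] (G : SimpleGraph V) (H : SimpleGraph W) (π : V ≃ W) : ℕ :=
  Finset.univ.sup (mismatchDeg G H π)

/-- The edit mismatch norm `μ_edit(G^π, H)`: the number of edges of the mismatch graph. -/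
noncomputable def muEdit (G : SimpleGraph V) (H : SimpleGraph W) (π : V ≃ W) : ℕ :=
  (mismatchGraph G H π).edgeSet.ncard

/-- The edit distance `δ_edit(G, H)`: the minimum of `μ_edit(G^π, H)` over all bijections. -/
noncomputable def deltaEdit (G : SimpleGraph V) (H : SimpleGraph W) : ℕ :=
  ⨅ π : V ≃ W, muEdit G H π

open Classical in
/-- The signed adjacency matrix of the mismatch graph `G^π − H`:
`+1` on positive edges, `−1` on negative edges, `0` otherwise. -/
noncomputable def signedAdj (G : SimpleGraph V) (H : SimpleGraph W) (π : V ≃ W) :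
    Matrix W W ℝ := fun x y =>
  if (G.map π.toEmbedding).Adj x y ∧ ¬ H.Adj x y then 1
  else if H.Adj x y ∧ ¬ (G.map π.toEmbedding).Adj x y then -1 else 0

/-- The `ℓ_p` norm of a vector over a finite index type. -/
noncomputable def lpNorm [Fintype W] (p : ℝ) (x : W → ℝ) : ℝ :=
  (∑ i, |x i| ^ p) ^ p⁻¹

/-- The `ℓ_p`-operator norm of a matrix: `sup_{x ≠ 0} ‖Mx‖_p / ‖x‖_p`. -/
noncomputable def lpOpNorm [Fintype W] (p : ℝ) (M : Matrix W W ℝ) : ℝ :=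
  ⨆ x : {x : W → ℝ // x ≠ 0}, lpNorm p (M.mulVec x.1) / lpNorm p x.1

end MismatchDefs

/-- `G[q]`: attach an auxiliary `(q+1)`-clique to each vertex `v` of `G`.
The clique vertices of `v` are `Sum.inr (v, i)` for `i : Fin (q+1)`; the clique is joined
to `v` via the edge `{v^[1], v}`, where `v^[1]` is `Sum.inr (v, 0)`. -/
def extendCliques {V : Type*} (G : SimpleGraph V) (q : ℕ) :
    SimpleGraph (V ⊕ V × Fin (q + 1)) :=
  SimpleGraph.fromRel (fun a b =>
    match a, b with
    | Sum.inl u, Sum.inl v => G.Adj u v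
    | Sum.inl u, Sum.inr (v, i) => u = v ∧ i = 0
    | Sum.inr _, Sum.inl _ => False
    | Sum.inr (u, _), Sum.inr (v, _) => u = v)

/-- `D_{n,q}`: the graph `C_n[q]` together with the edges `{u^[1], v^[1]}` for `{u,v}`
ranging over the perfect matching `{{2i, 2i+1} : 0 ≤ i < n/2}` of the cycle `C_n`
(`n` even). -/
def Dgraph (n q : ℕ) : SimpleGraph (Fin n ⊕ Fin n × Fin (q + 1)) :=
  extendCliques (SimpleGraph.cycleGraph n) q ⊔
    SimpleGraph.fromRel (fun a b =>
      match a, b with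
      | Sum.inr (u, i), Sum.inr (v, j) => i = 0 ∧ j = 0 ∧ u.val / 2 = v.val / 2
      | _, _ => False)

open Sum

lemma SimpleGraph.IsRegularOfDegree.ncard_neighborSet {V : Type*} {G : SimpleGraph V}
    [G.LocallyFinite] {d : ℕ} (h : G.IsRegularOfDegree d) (v : V) :
    (G.neighborSet v).ncard = d := by
  rw [Set.ncard_eq_toFinset_card', Set.toFinset_card, card_neighborSet_eq_degree, h v]

lemma Equiv.exists_apply_inr_eq_inl {α β α' β' : Type*} [Finite β']
    (e : α ⊕ β ≃ α' ⊕ β') (hcard : Nat.card β' ≤ Nat.card β) {a : α} {b' : β'}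
    (h : e (inl a) = inr b') : ∃ b a', e (inr b) = inl a' := by
  by_contra! hright
  have hinr (b : β) : ∃ c, e (inr b) = inr c := by
    rcases hb : e (inr b) with a' | c
    exacts [absurd hb (hright b a'), ⟨c, rfl⟩]
  choose f hf using hinr
  have hf_inj : Function.Injective f := fun b₁ b₂ h =>
    inr_injective (e.injective (by rw [hf, hf, h]))
  obtain ⟨b, hb⟩ := (hf_inj.bijective_of_nat_card_le hcard).2 b'
  exact inl_ne_inr (e.injective (h.trans (hb ▸ hf b).symm))

section Mismatch

variable {V W : Type*} (G : SimpleGraph V) (H : SimpleGraph W) (π : V ≃ W)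

lemma mismatchGraph_adj {x y : W} :
    (mismatchGraph G H π).Adj x y ↔ ¬(G.Adj (π.symm x) (π.symm y) ↔ H.Adj x y) := by
  have hmap : (G.map π.toEmbedding).Adj x y ↔ G.Adj (π.symm x) (π.symm y) := by
    simpa using (map_adj_apply (G := G) (f := π.toEmbedding) (a := π.symm x) (b := π.symm y))
  rw [mismatchGraph, symmDiff_def, sup_adj, sdiff_adj, sdiff_adj, hmap]
  tauto

lemma neighborSet_subset_union_symmDiff (A B : SimpleGraph W) (x : W) :
    B.neighborSet x ⊆ A.neighborSet x ∪ (symmDiff A B).neighborSet x := by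
  intro y hy
  by_cases hA : A.Adj x y
  · exact Or.inl hA
  · exact Or.inr (by simp [symmDiff_def, hA, show B.Adj x y from hy])

lemma ncard_neighborSet_le_add_mismatchDeg [Finite W] (u : V) :
    (H.neighborSet (π u)).ncard ≤ (G.neighborSet u).ncard + mismatchDeg G H π (π u) := by
  calc (H.neighborSet (π u)).ncard
      ≤ ((G.map π.toEmbedding).neighborSet (π u)).ncard + mismatchDeg G H π (π u) :=
        (Set.ncard_le_ncard (neighborSet_subset_union_symmDiff _ H _)).trans
          (Set.ncard_union_le _ _)
    _ = (G.neighborSet u).ncard + mismatchDeg G H π (π u) := by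
        rw [← Equiv.coe_toEmbedding, neighborSet_map,
          Set.ncard_image_of_injective _ π.toEmbedding.injective]

lemma ncard_neighborSet_le_add_mismatchDeg' [Finite W] (u : V) :
    (G.neighborSet u).ncard ≤ (H.neighborSet (π u)).ncard + mismatchDeg G H π (π u) := by
  calc (G.neighborSet u).ncard = ((G.map π.toEmbedding).neighborSet (π u)).ncard := by
        rw [← Equiv.coe_toEmbedding, neighborSet_map,
          Set.ncard_image_of_injective _ π.toEmbedding.injective]
    _ ≤ (H.neighborSet (π u)).ncard + mismatchDeg G H π (π u) := by
        refine (Set.ncard_le_ncard (neighborSet_subset_union_symmDiff H _ _)).trans ?_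
        rw [symmDiff_comm]
        exact Set.ncard_union_le _ _

lemma sum_mismatchDeg [Fintype W] : ∑ x, mismatchDeg G H π x = 2 * muEdit G H π := by
  classical
  have hdeg (x : W) : mismatchDeg G H π x = (mismatchGraph G H π).degree x := by
    rw [mismatchDeg, ← card_neighborSet_eq_degree, Set.ncard_eq_toFinset_card',
      Set.toFinset_card]
  simp only [hdeg, sum_degrees_eq_twice_card_edges, muEdit, ← coe_edgeFinset,
    Set.ncard_coe_finset]

lemma mismatchDeg_add_mismatchDeg_le [Fintype W] {x y : W} (hxy : x ≠ y) :
    mismatchDeg G H π x + mismatchDeg G H π y ≤ 2 * muEdit G H π := by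
  classical
  rw [← sum_mismatchDeg, ← Finset.sum_pair hxy]
  exact Finset.sum_le_sum_of_subset (Finset.subset_univ _)

lemma deltaEdit_le_muEdit : deltaEdit G H ≤ muEdit G H π :=
  ciInf_le (OrderBot.bddBelow _) π

end Mismatch

section ExtendCliques

variable {V : Type*} {G : SimpleGraph V} {q : ℕ}

@[simp] lemma extendCliques_adj_inl_inl {u v : V} :
    (extendCliques G q).Adj (inl u) (inl v) ↔ G.Adj u v := by
  simp only [extendCliques, fromRel_adj]
  exact ⟨fun ⟨_, h⟩ => h.elim id G.adj_symm, fun h => ⟨by simpa using h.ne, Or.inl h⟩⟩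

@[simp] lemma extendCliques_adj_inl_inr {u v : V} {i : Fin (q + 1)} :
    (extendCliques G q).Adj (inl u) (inr (v, i)) ↔ u = v ∧ i = 0 := by
  simp [extendCliques]

@[simp] lemma extendCliques_adj_inr_inl {u v : V} {i : Fin (q + 1)} :
    (extendCliques G q).Adj (inr (v, i)) (inl u) ↔ u = v ∧ i = 0 := by
  rw [adj_comm, extendCliques_adj_inl_inr]

@[simp] lemma extendCliques_adj_inr_inr {u v : V} {i j : Fin (q + 1)} :
    (extendCliques G q).Adj (inr (u, i)) (inr (v, j)) ↔ u = v ∧ i ≠ j := by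
  simp only [extendCliques, fromRel_adj]
  aesop

lemma neighborSet_extendCliques_inl (v : V) :
    (extendCliques G q).neighborSet (inl v) = insert (inr (v, 0)) (inl '' G.neighborSet v) := by
  ext (u | ⟨u, i⟩) <;> simp [eq_comm]

lemma ncard_neighborSet_extendCliques_inl_le (v : V) :
    ((extendCliques G q).neighborSet (inl v)).ncard ≤ (G.neighborSet v).ncard + 1 := by
  rw [neighborSet_extendCliques_inl]
  exact (Set.ncard_insert_le _ _).trans_eq
    (by rw [Set.ncard_image_of_injective _ inl_injective])

lemma le_ncard_neighborSet_inr_of_extendCliques_le [Finite V]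
    {H : SimpleGraph (V ⊕ V × Fin (q + 1))} (hle : extendCliques G q ≤ H) (v : V)
    (i : Fin (q + 1)) : q ≤ (H.neighborSet (inr (v, i))).ncard := by
  have hclique : (fun j => inr (v, j)) '' {i}ᶜ ⊆ H.neighborSet (inr (v, i)) := by
    rintro _ ⟨j, hj, rfl⟩
    exact hle (extendCliques_adj_inr_inr.mpr ⟨rfl, Ne.symm hj⟩)
  calc q = ({i}ᶜ : Set (Fin (q + 1))).ncard := by
        rw [Set.ncard_compl, Set.ncard_singleton, Nat.card_eq_fintype_card, Fintype.card_fin,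
          Nat.add_sub_cancel]
    _ = ((fun j => inr (v, j)) '' {i}ᶜ : Set (V ⊕ V × Fin (q + 1))).ncard :=
      (Set.ncard_image_of_injective _ fun j k h => by simpa using h).symm
    _ ≤ _ := Set.ncard_le_ncard hclique

end ExtendCliques

section Dgraph

variable {n q : ℕ}

lemma extendCliques_le_Dgraph : extendCliques (cycleGraph n) q ≤ Dgraph n q := le_sup_left

@[simp] lemma Dgraph_adj_inl_inl {u v : Fin n} :
    (Dgraph n q).Adj (inl u) (inl v) ↔ (cycleGraph n).Adj u v := by
  simp [Dgraph]

@[simp] lemma Dgraph_adj_inl_inr {u v : Fin n} {i : Fin (q + 1)} :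
    (Dgraph n q).Adj (inl u) (inr (v, i)) ↔ u = v ∧ i = 0 := by
  simp [Dgraph]

@[simp] lemma Dgraph_adj_inr_inl {u v : Fin n} {i : Fin (q + 1)} :
    (Dgraph n q).Adj (inr (v, i)) (inl u) ↔ u = v ∧ i = 0 := by
  rw [adj_comm, Dgraph_adj_inl_inr]

@[simp] lemma Dgraph_adj_inr_inr {u v : Fin n} {i j : Fin (q + 1)} :
    (Dgraph n q).Adj (inr (u, i)) (inr (v, j)) ↔
      u = v ∧ i ≠ j ∨ i = 0 ∧ j = 0 ∧ u ≠ v ∧ u.val / 2 = v.val / 2 := by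
  simp only [Dgraph, sup_adj, fromRel_adj, extendCliques_adj_inr_inr]
  aesop

lemma ncard_neighborSet_cycleGraph_le (v : Fin n) : ((cycleGraph n).neighborSet v).ncard ≤ 2 := by
  match n, v with
  | 1, v => simp [cycleGraph_one_eq_bot]
  | m + 2, v =>
    rw [cycleGraph_neighborSet]
    exact (Set.ncard_insert_le _ _).trans (by rw [Set.ncard_singleton])

lemma ncard_neighborSet_Dgraph_inl_le (w : Fin n) :
    ((Dgraph n q).neighborSet (inl w)).ncard ≤ 3 := by
  have hnbr : (Dgraph n q).neighborSet (inl w) =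
      (extendCliques (cycleGraph n) q).neighborSet (inl w) := by
    ext (u | ⟨u, i⟩) <;> simp
  rw [hnbr]
  linarith [ncard_neighborSet_extendCliques_inl_le (G := cycleGraph n) (q := q) w,
    ncard_neighborSet_cycleGraph_le w]

end Dgraph

def extendCliquesEquiv {V W : Type*} (σ : V ≃ W) (q : ℕ) :
    V ⊕ V × Fin (q + 1) ≃ W ⊕ W × Fin (q + 1) :=
  σ.sumCongr (σ.prodCongr (Equiv.refl _))

section CanonicalBijection

variable {V : Type*} {n q : ℕ} (G : SimpleGraph V) (σ : V ≃ Fin n)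

lemma mismatchDeg_extendCliquesEquiv_inl_le (w : Fin n) :
    mismatchDeg (extendCliques G q) (Dgraph n q) (extendCliquesEquiv σ q) (inl w) ≤
      (G.neighborSet (σ.symm w)).ncard + 2 := by
  have hsub :
      (mismatchGraph (extendCliques G q) (Dgraph n q) (extendCliquesEquiv σ q)).neighborSet (inl w)
        ⊆ inl '' (σ '' G.neighborSet (σ.symm w) ∪ (cycleGraph n).neighborSet w) := by
    rintro (u | ⟨u, i⟩) hu
    · simp [mismatchGraph_adj, extendCliquesEquiv] at hu ⊢
      tauto
    · simp [mismatchGraph_adj, extendCliquesEquiv] at hu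
  calc _ ≤ (σ '' G.neighborSet (σ.symm w) ∪ (cycleGraph n).neighborSet w).ncard :=
        (Set.ncard_le_ncard hsub).trans_eq (Set.ncard_image_of_injective _ inl_injective)
    _ ≤ (G.neighborSet (σ.symm w)).ncard + 2 := by
        grw [Set.ncard_union_le, Set.ncard_image_of_injective _ σ.injective,
          ncard_neighborSet_cycleGraph_le]

lemma mismatchDeg_extendCliquesEquiv_inr_le (w : Fin n) (i : Fin (q + 1)) :
    mismatchDeg (extendCliques G q) (Dgraph n q) (extendCliquesEquiv σ q) (inr (w, i)) ≤
      if i = 0 then 1 else 0 := by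
  set partners := {u : Fin n | i = 0 ∧ u ≠ w ∧ u.val / 2 = w.val / 2}
  have hsub :
      (mismatchGraph (extendCliques G q) (Dgraph n q) (extendCliquesEquiv σ q)).neighborSet
        (inr (w, i)) ⊆ (fun u => inr (u, 0)) '' partners := by
    rintro (u | ⟨u, j⟩) hu
    · simp [mismatchGraph_adj, extendCliquesEquiv] at hu
    · simp [mismatchGraph_adj, extendCliquesEquiv] at hu
      obtain ⟨hi, hj, hne, hdiv, -⟩ := hu
      exact ⟨u, ⟨hi, Ne.symm hne, hdiv.symm⟩, by rw [hj]⟩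
  refine (Set.ncard_le_ncard hsub).trans ((Set.ncard_image_le (Set.toFinite _)).trans ?_)
  split_ifs with hi
  · refine Set.ncard_le_one_iff_subsingleton.mpr
      fun a ⟨_, ha, ha'⟩ b ⟨_, hb, hb'⟩ => Fin.ext ?_
    have := Fin.val_ne_of_ne ha
    have := Fin.val_ne_of_ne hb
    omega
  · simp [partners, hi]

lemma muEdit_extendCliquesEquiv_le [Fintype V] [DecidableRel G.Adj]
    (hreg : G.IsRegularOfDegree 3) :
    muEdit (extendCliques G q) (Dgraph n q) (extendCliquesEquiv σ q) ≤ 3 * n := by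
  have hsum := sum_mismatchDeg (extendCliques G q) (Dgraph n q) (extendCliquesEquiv σ q)
  rw [Fintype.sum_sum_type, Fintype.sum_prod_type] at hsum
  have hinl : ∑ w : Fin n, mismatchDeg (extendCliques G q) (Dgraph n q) (extendCliquesEquiv σ q)
      (inl w) ≤ ∑ _w : Fin n, 5 := Finset.sum_le_sum fun w _ => by
    grw [mismatchDeg_extendCliquesEquiv_inl_le, hreg.ncard_neighborSet]
  have hinr : ∑ w : Fin n, ∑ i : Fin (q + 1), mismatchDeg (extendCliques G q) (Dgraph n q)
      (extendCliquesEquiv σ q) (inr (w, i)) ≤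
        ∑ _w : Fin n, ∑ i : Fin (q + 1), if i = 0 then 1 else 0 :=
    Finset.sum_le_sum fun w _ => Finset.sum_le_sum fun i _ =>
      mismatchDeg_extendCliquesEquiv_inr_le G σ w i
  simp only [Finset.sum_const, Finset.card_univ, Fintype.card_fin, smul_eq_mul,
    Finset.sum_ite_eq', Finset.mem_univ, if_true] at hinl hinr
  omega

end CanonicalBijection

section Misplaced

variable {V : Type*} {G : SimpleGraph V} {n q : ℕ}
  {π : V ⊕ V × Fin (q + 1) ≃ Fin n ⊕ Fin n × Fin (q + 1)}

lemma le_add_mismatchDeg_of_apply_inl_eq_inr {v : V} {w : Fin n} {i : Fin (q + 1)}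
    (h : π (inl v) = inr (w, i)) :
    q ≤ (G.neighborSet v).ncard + 1 +
      mismatchDeg (extendCliques G q) (Dgraph n q) π (inr (w, i)) := by
  have hmis := ncard_neighborSet_le_add_mismatchDeg (extendCliques G q) (Dgraph n q) π (inl v)
  rw [h] at hmis
  calc q ≤ ((Dgraph n q).neighborSet (inr (w, i))).ncard :=
        le_ncard_neighborSet_inr_of_extendCliques_le extendCliques_le_Dgraph w i
    _ ≤ _ := hmis
    _ ≤ _ := by grw [ncard_neighborSet_extendCliques_inl_le]

lemma le_add_mismatchDeg_of_apply_inr_eq_inl [Finite V] {a : V × Fin (q + 1)} {w : Fin n}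
    (h : π (inr a) = inl w) :
    q ≤ 3 + mismatchDeg (extendCliques G q) (Dgraph n q) π (inl w) := by
  have hmis := ncard_neighborSet_le_add_mismatchDeg' (extendCliques G q) (Dgraph n q) π (inr a)
  rw [h] at hmis
  calc q ≤ ((extendCliques G q).neighborSet (inr a)).ncard :=
        le_ncard_neighborSet_inr_of_extendCliques_le le_rfl a.1 a.2
    _ ≤ _ := hmis
    _ ≤ _ := by grw [ncard_neighborSet_Dgraph_inl_le]

end Misplaced

theorem statement_3_general {V : Type*} [Fintype V] (n : ℕ)
    (G : SimpleGraph V) [DecidableRel G.Adj] (hcard : Fintype.card V = n)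
    (hreg : G.IsRegularOfDegree 3)
    (π : (V ⊕ V × Fin (3 * n + 4 + 1)) ≃ (Fin n ⊕ Fin n × Fin (3 * n + 4 + 1)))
    (hopt : muEdit (extendCliques G (3 * n + 4)) (Dgraph n (3 * n + 4)) π
      = deltaEdit (extendCliques G (3 * n + 4)) (Dgraph n (3 * n + 4))) :
    ∀ v : V, ∃ w : Fin n, π (Sum.inl v) = Sum.inl w := by
  intro v
  by_contra! hv
  obtain ⟨⟨w, i⟩, hx⟩ : ∃ p, π (inl v) = inr p := by
    rcases hx : π (inl v) with w | p
    exacts [absurd hx (hv w), ⟨p, rfl⟩]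
  obtain ⟨a, w', hy⟩ := π.exists_apply_inr_eq_inl (by simp [hcard]) hx
  have hopt_le : muEdit (extendCliques G (3 * n + 4)) (Dgraph n (3 * n + 4)) π ≤ 3 * n := by
    rw [hopt]
    exact (deltaEdit_le_muEdit _ _ _).trans
      (muEdit_extendCliquesEquiv_le G (Fintype.equivFinOfCardEq hcard) hreg)
  have hx_deg := le_add_mismatchDeg_of_apply_inl_eq_inr (G := G) hx
  have hy_deg := le_add_mismatchDeg_of_apply_inr_eq_inl (G := G) hy
  have hpair := mismatchDeg_add_mismatchDeg_le (extendCliques G _) (Dgraph n _) π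
    (inr_ne_inl (b := (w, i)) (a := w'))
  rw [hreg.ncard_neighborSet] at hx_deg
  omega

/-- Let `G` be a 3-regular graph on `n` vertices (`n` even, `n ≥ 4`) and
`q = 3n + 4`. Any bijection `π` attaining `δ_edit(G[q], D_{n,q})` is `(G, C_n)`-conservative:
it maps the original vertices of `G` inside `G[q]` into the original cycle vertices
inside `D_{n,q}`. -/
theorem statement_3 {V : Type*} [Fintype V] (n : ℕ) (hEven : Even n) (hn : 4 ≤ n)
    (G : SimpleGraph V) [DecidableRel G.Adj] (hcard : Fintype.card V = n)
    (hreg : G.IsRegularOfDegree 3)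
    (π : (V ⊕ V × Fin (3 * n + 4 + 1)) ≃ (Fin n ⊕ Fin n × Fin (3 * n + 4 + 1)))
    (hopt : muEdit (extendCliques G (3 * n + 4)) (Dgraph n (3 * n + 4)) π
      = deltaEdit (extendCliques G (3 * n + 4)) (Dgraph n (3 * n + 4))) :
    ∀ v : V, ∃ w : Fin n, π (Sum.inl v) = Sum.inl w :=
  statement_3_general n G hcard hreg π hopt
end

section
/- Let k ≥ 2 be even, let G_k be a 3-regular bipartite graph on 2k vertices with bipartition into independent sets A and B of size k, and let H_k be as constructed. If G_k has no Hamiltonian cycle, then every σ ∈ Res(G_k, H_k) satisfies MMC(σ) ≥ 4, where MMC(σ) is the maximum degree of a vertex of the mismatch graph G_k^σ − H_k. -/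
open SimpleGraph

/-- The graph `H_k` on vertex set `{0, 1, …, 2k−1}`: the Hamiltonian cycle
`0 − 1 − ⋯ − (2k−1) − 0` together with, for even `k`, the chords `{i, i+2}` for
`i ≡ 0, 1 (mod 4)`, and for odd `k`, the chords `{i, i−2}` for `i ≡ 2 (mod 4)`,
`{i, i+2}` for `i ≡ 3 (mod 4)`, and `{2k−2, 1}`. -/
def Hk (k : ℕ) : SimpleGraph (Fin (2 * k)) :=
  SimpleGraph.fromRel (fun a b =>
    (b.val = a.val + 1) ∨ (a.val = 2 * k - 1 ∧ b.val = 0) ∨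
    (if k % 2 = 0 then
      (a.val % 4 = 0 ∨ a.val % 4 = 1) ∧ b.val = a.val + 2
    else
      (a.val % 4 = 2 ∧ b.val = a.val - 2) ∨ (a.val % 4 = 3 ∧ b.val = a.val + 2) ∨
        (a.val = 2 * k - 2 ∧ b.val = 1)))

/-- Attach `5` new pendant leaves to every vertex satisfying `P` and `12` new pendant
leaves to every other vertex. The leaves of `v` are `Sum.inr ⟨v, i⟩`. -/
def hatGraph {V : Type*} (G : SimpleGraph V) (P : V → Prop) [DecidablePred P] :
    SimpleGraph (V ⊕ Σ v : V, Fin (if P v then 5 else 12)) :=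
  SimpleGraph.fromRel (fun a b =>
    match a, b with
    | Sum.inl u, Sum.inl v => G.Adj u v
    | Sum.inl u, Sum.inr x => u = x.1
    | _, _ => False)

/-- `σ ∈ Res(G_k, H_k)`: the bijection `σ` maps the independent set `A` onto the even
vertices `Even(2k)` (and hence its complement `B` onto the odd vertices `Odd(2k)`). -/
def InRes {V : Type*} (k : ℕ) (A : Finset V) (σ : V ≃ Fin (2 * k)) : Prop :=
  ∀ v, v ∈ A ↔ (σ v).val % 2 = 0

/-! Suppose `MMC(σ) ≤ 3`. Since `σ` sends `A` to the even and `B` to the odd vertices, the three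
neighbours of `σ⁻¹ x` in `G` land on vertices of parity opposite to `x`. Counting mismatches at `x`
then shows that `σ⁻¹ x` and `σ⁻¹ (x + 1)` must be adjacent in `G` for every `x`, so `σ⁻¹` carries
the Hamiltonian cycle `0 − 1 − ⋯ − (2k−1) − 0` of `H_k` onto a Hamiltonian cycle of `G`. -/

lemma cycleGraph_isHamiltonian (n : ℕ) : (cycleGraph (n + 3)).IsHamiltonian := fun _ =>
  ⟨0, cycleGraph.cycle n,
    Walk.isHamiltonianCycle_iff_isCycle_and_length_eq.2 ⟨cycleGraph.isCycle_cycle, by simp⟩⟩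

lemma isHamiltonian_of_adj_add_one {V : Type*} [Fintype V] [DecidableEq V] {G : SimpleGraph V}
    {n : ℕ} [NeZero n] (hn : 3 ≤ n) (e : Fin n ≃ V) (hadj : ∀ i, G.Adj (e i) (e (i + 1))) :
    G.IsHamiltonian := by
  obtain ⟨N, rfl⟩ : ∃ N, n = N + 3 := ⟨n - 3, by omega⟩
  let f : cycleGraph (N + 3) →g G := ⟨e, fun {u v} huv => by
    rcases huv with h | h
    · obtain rfl := sub_eq_iff_eq_add'.1 h; exact (hadj v).symm
    · obtain rfl := sub_eq_iff_eq_add'.1 h; exact hadj u⟩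
  intro _
  obtain ⟨a, p, hp⟩ := cycleGraph_isHamiltonian N (by simp)
  exact ⟨f a, p.map f, hp.map e.bijective⟩

lemma Fin.val_add_one_eq_ite {n : ℕ} [NeZero n] (x : Fin n) :
    (x + 1).val = if x.val + 1 = n then 0 else x.val + 1 := by
  rw [Fin.val_add, Fin.val_one', Nat.add_mod_mod]
  split_ifs with h
  · rw [h, Nat.mod_self]
  · exact Nat.mod_eq_of_lt (by omega)

section HkEven

variable {k : ℕ}

lemma Hk_adj_iff_of_even (hk : Even k) {a b : Fin (2 * k)} :
    (Hk k).Adj a b ↔ a ≠ b ∧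
      ((b.val = a.val + 1 ∨ (a.val = 2 * k - 1 ∧ b.val = 0) ∨
          ((a.val % 4 = 0 ∨ a.val % 4 = 1) ∧ b.val = a.val + 2)) ∨
        (a.val = b.val + 1 ∨ (b.val = 2 * k - 1 ∧ a.val = 0) ∨
          ((b.val % 4 = 0 ∨ b.val % 4 = 1) ∧ a.val = b.val + 2))) := by
  rw [Hk, fromRel_adj, if_pos (Nat.even_iff.1 hk), if_pos (Nat.even_iff.1 hk)]

lemma Hk_adj_add_one (hk : Even k) [NeZero (2 * k)] (x : Fin (2 * k)) : (Hk k).Adj x (x + 1) := by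
  have := x.isLt
  rw [Hk_adj_iff_of_even hk, Ne, Fin.ext_iff, Fin.val_add_one_eq_ite]
  split_ifs <;> omega

lemma Hk_exists_adj_val_mod_two_eq (hk : Even k) (x : Fin (2 * k)) :
    ∃ c, (Hk k).Adj x c ∧ c.val % 2 = x.val % 2 := by
  have := x.isLt
  obtain ⟨m, hm⟩ := id hk
  rcases Nat.lt_or_ge (x.val % 4) 2 with h | h
  · refine ⟨⟨x.val + 2, by omega⟩, ?_, show (x.val + 2) % 2 = x.val % 2 by omega⟩
    rw [Hk_adj_iff_of_even hk, Ne, Fin.ext_iff]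
    dsimp only
    omega
  · refine ⟨⟨x.val - 2, by omega⟩, ?_, show (x.val - 2) % 2 = x.val % 2 by omega⟩
    rw [Hk_adj_iff_of_even hk, Ne, Fin.ext_iff]
    dsimp only
    omega

lemma Hk_eq_add_one_or_eq_sub_one_of_adj (hk : Even k) [NeZero (2 * k)] {x y : Fin (2 * k)}
    (hxy : (Hk k).Adj x y) (hpar : y.val % 2 ≠ x.val % 2) : y = x + 1 ∨ y = x - 1 := by
  rw [eq_sub_iff_add_eq, Fin.ext_iff, Fin.ext_iff, Fin.val_add_one_eq_ite,
    Fin.val_add_one_eq_ite]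
  rw [Hk_adj_iff_of_even hk, Ne, Fin.ext_iff] at hxy
  have := x.isLt
  have := y.isLt
  split_ifs <;> omega

end HkEven

section Mismatch

variable {V W : Type*} {G : SimpleGraph V} {H : SimpleGraph W} {π : V ≃ W}

lemma map_equiv_adj {x y : W} :
    (G.map π.toEmbedding).Adj x y ↔ G.Adj (π.symm x) (π.symm y) := by
  simpa using map_adj_apply (G := G) (f := π.toEmbedding) (a := π.symm x) (b := π.symm y)

lemma ncard_map_equiv_neighborSet [G.LocallyFinite] (x : W) :
    ((G.map π.toEmbedding).neighborSet x).ncard = G.degree (π.symm x) := by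
  obtain ⟨v, rfl⟩ := π.surjective x
  rw [Equiv.symm_apply_apply, show π v = π.toEmbedding v from rfl, neighborSet_map,
    Set.ncard_image_of_injective _ π.toEmbedding.injective, Set.ncard_eq_toFinset_card',
    ← neighborFinset_def, card_neighborFinset_eq_degree]

lemma mismatchDeg_eq_posDeg_add_negDeg [Finite W] (x : W) :
    mismatchDeg G H π x = posDeg G H π x + negDeg G H π x := by
  rw [mismatchDeg, posDeg, negDeg, ← Set.ncard_union_eq disjoint_sdiff_sdiff]
  rfl

end Mismatch

lemma InRes.val_mod_two_ne_of_adj {V : Type*} {k : ℕ} {G : SimpleGraph V} {A B : Finset V}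
    {σ : V ≃ Fin (2 * k)} (hres : InRes k A σ) (hUnion : ∀ v, v ∈ A ∨ v ∈ B)
    (hAind : ∀ u ∈ A, ∀ v ∈ A, ¬ G.Adj u v) (hBind : ∀ u ∈ B, ∀ v ∈ B, ¬ G.Adj u v)
    {u v : V} (huv : G.Adj u v) : (σ u).val % 2 ≠ (σ v).val % 2 := by
  intro heq
  have hside : u ∈ A ↔ v ∈ A := by rw [hres, hres, heq]
  by_cases hu : u ∈ A
  · exact hAind u hu v (hside.1 hu) huv
  · exact hBind u ((hUnion u).resolve_left hu) v
      ((hUnion v).resolve_left (not_congr hside |>.1 hu)) huv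

/- Otherwise `x + 1` and the same-parity chord at `x` are two negative edges at `x`, while of the
three opposite-parity `G`-neighbours only `x - 1` can be an `H_k`-neighbour, leaving two positive
edges. -/
lemma adj_symm_add_one_of_mismatchDeg_le_three {V : Type*} [Fintype V] {k : ℕ} (hk : Even k)
    [NeZero (2 * k)] {G : SimpleGraph V} [DecidableRel G.Adj] (hreg : G.IsRegularOfDegree 3)
    {σ : V ≃ Fin (2 * k)} (hpar : ∀ u v, G.Adj u v → (σ u).val % 2 ≠ (σ v).val % 2)
    {x : Fin (2 * k)} (hx : mismatchDeg G (Hk k) σ x ≤ 3) :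
    G.Adj (σ.symm x) (σ.symm (x + 1)) := by
  by_contra hnadj
  set S := (G.map σ.toEmbedding).neighborSet x
  set T := (Hk k).neighborSet x
  have hS_par : ∀ y ∈ S, y.val % 2 ≠ x.val % 2 := fun y hy => by
    simpa using (hpar _ _ (map_equiv_adj.1 hy)).symm
  have hS_card : S.ncard = 3 := (ncard_map_equiv_neighborSet x).trans (hreg _)
  have hx1 : x + 1 ∈ T \ S := ⟨Hk_adj_add_one hk x, fun h => hnadj (map_equiv_adj.1 h)⟩
  obtain ⟨c, hc, hc_par⟩ := Hk_exists_adj_val_mod_two_eq hk x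
  have hneg : 2 ≤ negDeg G (Hk k) σ x := by
    have hc_ne : c ≠ x + 1 := by
      rintro rfl
      rw [Fin.val_add_one_eq_ite] at hc_par
      split_ifs at hc_par <;> omega
    calc 2 = ({c, x + 1} : Set _).ncard := (Set.ncard_pair hc_ne).symm
      _ ≤ (T \ S).ncard := Set.ncard_le_ncard
          (Set.insert_subset ⟨hc, fun h => hS_par c h hc_par⟩ (Set.singleton_subset_iff.2 hx1))
  have hinter : (S ∩ T).ncard ≤ 1 := by
    have hsub : S ∩ T ⊆ {x - 1} := fun y ⟨hyS, hyT⟩ =>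
      (Hk_eq_add_one_or_eq_sub_one_of_adj hk hyT (hS_par y hyS)).resolve_left
        (by rintro rfl; exact hx1.2 hyS)
    simpa using Set.ncard_le_ncard hsub
  have hpos : 2 ≤ posDeg G (Hk k) σ x := by
    have := Set.ncard_inter_add_ncard_sdiff_eq_ncard S T
    change 2 ≤ (S \ T).ncard
    omega
  have := mismatchDeg_eq_posDeg_add_negDeg (G := G) (H := Hk k) (π := σ) x
  omega

theorem statement_8_general {V : Type*} [Fintype V] [DecidableEq V] (k : ℕ) (hk : 2 ≤ k)
    (hkpar : Even k)
    (G : SimpleGraph V) [DecidableRel G.Adj] (A B : Finset V)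
    (hUnion : ∀ v, v ∈ A ∨ v ∈ B)
    (hreg : G.IsRegularOfDegree 3)
    (hAind : ∀ u ∈ A, ∀ v ∈ A, ¬ G.Adj u v) (hBind : ∀ u ∈ B, ∀ v ∈ B, ¬ G.Adj u v)
    (hHam : ¬ G.IsHamiltonian) :
    ∀ σ : V ≃ Fin (2 * k), InRes k A σ → 4 ≤ MMC G (Hk k) σ := by
  intro σ hres
  by_contra! hlt
  have : NeZero (2 * k) := ⟨by omega⟩
  have hdeg (x : Fin (2 * k)) : mismatchDeg G (Hk k) σ x ≤ 3 :=
    Nat.le_of_lt_succ ((Finset.le_sup (Finset.mem_univ x)).trans_lt hlt)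
  exact hHam <| isHamiltonian_of_adj_add_one (by omega) σ.symm fun x =>
    adj_symm_add_one_of_mismatchDeg_le_three hkpar hreg
      (fun _ _ => hres.val_mod_two_ne_of_adj hUnion hAind hBind) (hdeg x)

/-- Let `k ≥ 2` be even, and let `G` be a 3-regular bipartite graph on
`2k` vertices with bipartition into independent sets `A`, `B` of size `k`. If `G` has no
Hamiltonian cycle, then every `σ ∈ Res(G, H_k)` satisfies `MMC(σ) ≥ 4`. -/
theorem statement_8 {V : Type*} [Fintype V] [DecidableEq V] (k : ℕ) (hk : 2 ≤ k)
    (hkpar : Even k)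
    (G : SimpleGraph V) [DecidableRel G.Adj] (A B : Finset V)
    (hcard : Fintype.card V = 2 * k) (hA : A.card = k) (hB : B.card = k)
    (hUnion : ∀ v, v ∈ A ∨ v ∈ B) (hDisj : Disjoint A B)
    (hreg : G.IsRegularOfDegree 3)
    (hAind : ∀ u ∈ A, ∀ v ∈ A, ¬ G.Adj u v) (hBind : ∀ u ∈ B, ∀ v ∈ B, ¬ G.Adj u v)
    (hHam : ¬ G.IsHamiltonian) :
    ∀ σ : V ≃ Fin (2 * k), InRes k A σ → 4 ≤ MMC G (Hk k) σ :=
  statement_8_general k hk hkpar G A B hUnion hreg hAind hBind hHam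
end
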